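/- arXiv:math/0404499 — 2 statements merged into one kernel-verified Lean document; each statement's English description precedes it below -/
import Mathlib

section
/- Let G be a nilpotent group of class two, minimally generated by elements x₁, …, x_m of orders 2^(r₁) ≤ ⋯ ≤ 2^(r_m) respectively, with all r_i ≥ 1, and assume that m > 1 and r_m = r_(m-1) + 1. If G is capable, then at least one of the commutators [x_m, x_i] with i ∈ {1, …, m-1} has order exactly 2^(r_(m-1)). -/
/-!
Write `e = r_{m-1}` and suppose every `[x_m, x_i]`, `i < m`, had order different from `2 ^ e`.
In class two the order of `[x_m, x_i]` divides that of `x_i`, hence `2 ^ e`, so all these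
commutators have order dividing `n = 2 ^ (e - 1)`. Present `G` as `K / Z(K)` and lift `x_m`, `x_i`
to `a`, `b`. Then `[a, b] ^ n` and `b ^ (2n)` are central and triple commutators of `K` are
central, so (with Mathlib's `⁅g, h⁆ = g h g⁻¹ h⁻¹`)
`⁅a ^ q, b⁆ = ⁅⁅a, b⁆, a⁆ ^ (-C(q, 2)) * ⁅a, b⁆ ^ q` for all `q`. For `q = 2n` both factors
vanish, because `C(2n, 2)` is a multiple of `n` and `⁅⁅a, b⁆, a⁆ ^ n = ⁅⁅a, b⁆ ^ n, a⁆ = 1`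
(and symmetrically for `⁅a, b⁆ ^ (2n)`). Hence `a ^ (2n)` is central, i.e. `x_m ^ (2 ^ e) = 1`,
contradicting `orderOf x_m = 2 ^ (e + 1)`.
-/

universe u

/-- The paper's commutator convention: `[x,y] = x⁻¹y⁻¹xy`. -/
def pcomm {G : Type*} [Group G] (x y : G) : G := x⁻¹ * y⁻¹ * x * y

/-- A group is capable if it is isomorphic to `K/Z(K)` for some group `K`. -/
def IsCapable (G : Type u) [Group G] : Prop :=
  ∃ (K : Type u) (_ : Group K), Nonempty ((K ⧸ Subgroup.center K) ≃* G)

open Subgroup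
open scoped commutatorElement

section Commutators

variable {G : Type*} [Group G]

theorem orderOf_pcomm (x y : G) : orderOf (pcomm x y) = orderOf ⁅x, y⁆ :=
  SemiconjBy.orderOf_eq (y * x) (by simp only [SemiconjBy, pcomm, commutatorElement_def]; group)

theorem commutatorElement_commutatorElement_eq_one_of_lowerCentralSeries_two_eq_bot
    (h : (⊤ : Subgroup G).lowerCentralSeries 2 = ⊥) (a b c : G) : ⁅⁅a, b⁆, c⁆ = 1 := by
  rw [← mem_bot, ← h]
  exact commutator_mem_commutator (commutator_mem_commutator (mem_top _) (mem_top _)) (mem_top _)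

theorem commutatorElement_pow_left_of_commute {a b : G} (h : Commute a ⁅a, b⁆) (n : ℕ) :
    ⁅a ^ n, b⁆ = ⁅a, b⁆ ^ n := by
  induction n with
  | zero => simp
  | succ n ih =>
    rw [pow_succ', commutatorElement_mul_left_eq_conj_mul, ih, (h.pow_right n).eq, pow_succ]
    group

theorem orderOf_commutatorElement_dvd_orderOf_right (h : ∀ a b c : G, ⁅⁅a, b⁆, c⁆ = 1)
    (a b : G) : orderOf ⁅a, b⁆ ∣ orderOf b := by
  have hcomm : Commute b ⁅b, a⁆ :=
    (commutatorElement_eq_one_iff_commute.mp (h b a b)).symm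
  rw [← orderOf_inv, commutatorElement_inv]
  apply orderOf_dvd_of_pow_eq_one
  rw [← commutatorElement_pow_left_of_commute hcomm, pow_orderOf_eq_one,
    commutatorElement_one_left]

theorem commutatorElement_pow_left_of_mem_center {a b : G} (hc : ⁅⁅a, b⁆, a⁆ ∈ center G)
    (n : ℕ) : ⁅a ^ n, b⁆ = ⁅⁅a, b⁆, a⁆⁻¹ ^ n.choose 2 * ⁅a, b⁆ ^ n := by
  set c := ⁅⁅a, b⁆, a⁆
  have hc_conj : a * c⁻¹ * a⁻¹ = c⁻¹ := by
    rw [mem_center_iff.mp (inv_mem hc) a]; group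
  have hu_conj : a * ⁅a, b⁆ * a⁻¹ = c⁻¹ * ⁅a, b⁆ := by
    rw [commutatorElement_inv, commutatorElement_def a]; group
  induction n with
  | zero => simp
  | succ n ih =>
    rw [pow_succ', commutatorElement_mul_left_eq_conj_mul, ih, ← conj_mul, ← conj_pow, hc_conj,
      ← conj_pow, hu_conj, Commute.mul_pow (mem_center_iff.mp (inv_mem hc) _).symm,
      Nat.choose_succ_succ', Nat.choose_one_right, pow_add, pow_succ]
    group

theorem commutatorElement_commutatorElement_pow_eq_one {a b : G} {n : ℕ}
    (hc : ⁅⁅a, b⁆, a⁆ ∈ center G) (hu : ⁅a, b⁆ ^ n ∈ center G) : ⁅⁅a, b⁆, a⁆ ^ n = 1 := by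
  rw [← commutatorElement_pow_left_of_commute (mem_center_iff.mp hc _),
    commutatorElement_eq_one_iff_commute]
  exact (mem_center_iff.mp hu a).symm

theorem commute_pow_two_mul_of_mem_center (h : ∀ a b c : G, ⁅⁅a, b⁆, c⁆ ∈ center G)
    {a b : G} {n : ℕ} (hu : ⁅a, b⁆ ^ n ∈ center G) (hb : b ^ (2 * n) ∈ center G) :
    Commute (a ^ (2 * n)) b := by
  have hchoose : (2 * n).choose 2 = n * (2 * n - 1) := by
    rw [Nat.choose_two_right, mul_assoc, Nat.mul_div_cancel_left _ two_pos]
  have hv : ⁅b, a⁆ ^ n ∈ center G := by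
    rw [← commutatorElement_inv, inv_pow]
    exact inv_mem hu
  have hv_pow : ⁅b, a⁆ ^ (2 * n) = 1 := by
    have h_ba := commutatorElement_pow_left_of_mem_center (h b a b) (2 * n)
    rwa [hchoose, inv_pow, pow_mul ⁅⁅b, a⁆, b⁆,
      commutatorElement_commutatorElement_pow_eq_one (h b a b) hv, one_pow, inv_one, one_mul,
      commutatorElement_eq_one_iff_commute.mpr
        (mem_center_iff.mp hb a).symm, eq_comm] at h_ba
  rw [← commutatorElement_eq_one_iff_commute, commutatorElement_pow_left_of_mem_center (h a b a),
    hchoose, inv_pow, pow_mul ⁅⁅a, b⁆, a⁆,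
    commutatorElement_commutatorElement_pow_eq_one (h a b a) hu, one_pow, inv_one, one_mul,
    ← inv_inj, ← inv_pow, commutatorElement_inv, hv_pow, inv_one]

end Commutators

theorem mem_center_of_forall_commute {K G ι : Type*} [Group K] [Group G] (π : K →* G)
    (hker : π.ker ≤ center K) {y : ι → K} (hgen : closure (Set.range (π ∘ y)) = ⊤) {z : K}
    (hz : ∀ i, Commute z (y i)) : z ∈ center K := by
  have htop : closure (Set.range y) ⊔ π.ker = ⊤ := by
    rw [← comap_map_eq, MonoidHom.map_closure, ← Set.range_comp, hgen, comap_top]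
  have hle : closure (Set.range y) ⊔ π.ker ≤ centralizer {z} := by
    refine sup_le (closure_le _ |>.mpr ?_) (hker.trans (center_le_centralizer _))
    rintro _ ⟨i, rfl⟩
    rw [SetLike.mem_coe, mem_centralizer_iff]
    rintro _ rfl
    exact hz i
  rw [mem_center_iff]
  intro g
  exact (mem_centralizer_iff.mp (hle (htop ▸ mem_top g)) z rfl).symm

theorem IsCapable.exists_surjective_ker_eq_center {G : Type u} [Group G] (h : IsCapable G) :
    ∃ (K : Type u) (_ : Group K) (π : K →* G), Function.Surjective π ∧ π.ker = center K := by
  obtain ⟨K, _, ⟨φ⟩⟩ := h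
  exact ⟨K, _, (φ : K ⧸ center K →* G).comp (QuotientGroup.mk' _),
    φ.surjective.comp (QuotientGroup.mk'_surjective _),
    by rw [MonoidHom.ker_mulEquiv_comp, QuotientGroup.ker_mk']⟩

theorem Nat.Prime.dvd_pow_of_dvd_pow_succ_of_ne {p d k : ℕ} (hp : p.Prime) (hd : d ∣ p ^ (k + 1))
    (hne : d ≠ p ^ (k + 1)) : d ∣ p ^ k := by
  obtain ⟨i, hi, rfl⟩ := (Nat.dvd_prime_pow hp).mp hd
  exact Nat.pow_dvd_pow p (Nat.le_of_lt_succ (lt_of_le_of_ne hi (fun h => hne (h ▸ rfl))))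

/-- Let `G` be a nilpotent group of class two, minimally generated by `x₁, …, x_m`
with `orderOf (x i) = 2 ^ r i`, `1 ≤ r i`, `r` nondecreasing, `m > 1`, and
`r_m = r_{m-1} + 1`.  If `G` is capable, then some commutator `[x_m, x_i]` with
`i ∈ {1, …, m-1}` has order exactly `2 ^ r_{m-1}`. -/
theorem capable_class_two_commutator_condition {G : Type u} [Group G] {m : ℕ}
    (x : Fin m → G) (r : Fin m → ℕ)
    (hgen : Subgroup.closure (Set.range x) = ⊤)
    (hr : ∀ i, 1 ≤ r i) (hmono : Monotone r)
    (hord : ∀ i, orderOf (x i) = 2 ^ r i)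
    (hclass2 : (⊤ : Subgroup G).lowerCentralSeries 2 = ⊥)
    (hm : 1 < m)
    (hstep : r ⟨m - 1, by omega⟩ = r ⟨m - 2, by omega⟩ + 1)
    (hcap : IsCapable G) :
    ∃ i : Fin m, (i : ℕ) < m - 1 ∧
      orderOf (pcomm (x ⟨m - 1, by omega⟩) (x i)) = 2 ^ r ⟨m - 2, by omega⟩ := by
  by_contra! hcon
  obtain ⟨K, _, π, hπ, hker⟩ := hcap.exists_surjective_ker_eq_center
  choose y hy using fun i => hπ (x i)
  have hG := commutatorElement_commutatorElement_eq_one_of_lowerCentralSeries_two_eq_bot hclass2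
  have hK : ∀ a b c : K, ⁅⁅a, b⁆, c⁆ ∈ center K := fun a b c => by
    rw [← hker, MonoidHom.mem_ker, map_commutatorElement, map_commutatorElement, hG]
  obtain ⟨k, hk⟩ : ∃ k, r ⟨m - 2, by omega⟩ = k + 1 := Nat.exists_eq_add_of_le' (hr _)
  have hcomm (i : Fin m) : Commute (y ⟨m - 1, by omega⟩ ^ (2 * 2 ^ k)) (y i) := by
    obtain hi | hi := (Nat.le_sub_one_of_lt i.isLt).lt_or_eq
    · have hxi : 2 ^ r i ∣ 2 * 2 ^ k :=
        pow_succ' 2 k ▸ hk ▸ pow_dvd_pow 2 (hmono (Fin.mk_le_mk.mpr (by omega)))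
      have hxXi : orderOf ⁅x ⟨m - 1, by omega⟩, x i⁆ ∣ 2 ^ k :=
        Nat.prime_two.dvd_pow_of_dvd_pow_succ_of_ne
          (pow_succ' 2 k ▸
            (orderOf_commutatorElement_dvd_orderOf_right hG _ _).trans (hord i ▸ hxi))
          (by rw [← orderOf_pcomm, ← hk]; exact hcon i hi)
      apply commute_pow_two_mul_of_mem_center hK
      · rw [← hker, MonoidHom.mem_ker, map_pow, map_commutatorElement, hy, hy,
          orderOf_dvd_iff_pow_eq_one.mp hxXi]
      · rw [← hker, MonoidHom.mem_ker, map_pow, hy, orderOf_dvd_iff_pow_eq_one.mp (hord i ▸ hxi)]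
    · exact (Fin.ext hi : i = ⟨m - 1, by omega⟩) ▸ (Commute.refl _).pow_left _
  have hX : x ⟨m - 1, by omega⟩ ^ (2 * 2 ^ k) = 1 := by
    rw [← hy, ← map_pow, ← MonoidHom.mem_ker, hker]
    exact mem_center_of_forall_commute π hker.le (by simpa [Function.comp_def, hy] using hgen)
      hcomm
  have hdvd := orderOf_dvd_of_pow_eq_one hX
  rw [hord, hstep, hk, ← pow_succ', Nat.pow_dvd_pow_iff_le_right one_lt_two] at hdvd
  omega
end

section
/- Let K be a nilpotent group of class 3, let x and y be elements of K, and let α > 1 be an integer such that x^(2^α), [x,y]^(2^(α-1)), and x^(2^(α-1))[x,y]^(-2^(α-2)) all centralize the subgroup ⟨x,y⟩ generated by x and y. Then y^(2^(α-1)) commutes with x. -/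
theorem Nat.succ_choose_two (n : ℕ) : (n + 1).choose 2 = n + n.choose 2 := by
  simp [Nat.choose_succ_succ']

theorem Nat.choose_two_two_mul (a : ℕ) : (2 * a).choose 2 = a * (2 * a - 1) := by
  rw [Nat.choose_two_right, mul_assoc, Nat.mul_div_cancel_left _ two_pos]

theorem Nat.add_choose_two_two_mul (a : ℕ) : a + (2 * a).choose 2 = 2 * a * a := by
  rw [Nat.choose_two_two_mul]
  rcases a with _ | a
  · rfl
  · rw [show 2 * (a + 1) - 1 = 2 * a + 1 by omega]; ring

open scoped commutatorElement

open Subgroup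

section
variable {G : Type*} [Group G]

theorem pcomm_eq_commutatorElement (x y : G) : pcomm x y = ⁅x⁻¹, y⁻¹⁆ := by
  simp [pcomm, commutatorElement_def]

theorem pcomm_eq_one_iff {x y : G} : pcomm x y = 1 ↔ Commute x y := by
  rw [pcomm_eq_commutatorElement, commutatorElement_eq_one_iff_commute, Commute.inv_inv_iff]

theorem inv_mul_mul_eq_mul_pcomm (x g : G) : g⁻¹ * x * g = x * pcomm x g := by
  simp [pcomm, mul_assoc]

theorem inv_mul_pow_mul_eq_mul_pcomm_pow (x g : G) (n : ℕ) :
    g⁻¹ * x ^ n * g = (x * pcomm x g) ^ n := by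
  rw [← inv_mul_mul_eq_mul_pcomm]; simpa using (conj_pow (a := g⁻¹) (b := x) (i := n)).symm

theorem pcomm_mul_left (a b g : G) : pcomm (a * b) g = b⁻¹ * pcomm a g * b * pcomm b g := by
  unfold pcomm; group

theorem pcomm_mul_right (x a b : G) : pcomm x (a * b) = pcomm x b * (b⁻¹ * pcomm x a * b) := by
  unfold pcomm; group

theorem commute_mul_inv_iff_pcomm_eq {p q g : G} :
    Commute (p * q⁻¹) g ↔ pcomm p g = pcomm q g := by
  have : pcomm (p * q⁻¹) g = q * (pcomm p g * (pcomm q g)⁻¹) * q⁻¹ := by unfold pcomm; group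
  rw [← pcomm_eq_one_iff, this, conj_eq_one_iff, mul_inv_eq_one]

theorem pcomm_pow_left {x y : G} (hx : Commute x (pcomm (pcomm x y) x))
    (hc : Commute (pcomm x y) (pcomm (pcomm x y) x)) (n : ℕ) :
    pcomm (x ^ n) y = pcomm x y ^ n * pcomm (pcomm x y) x ^ n.choose 2 := by
  induction n with
  | zero => simp [pcomm]
  | succ n ih =>
    have hconj : x⁻¹ * pcomm (x ^ n) y * x =
        (pcomm x y * pcomm (pcomm x y) x) ^ n * pcomm (pcomm x y) x ^ n.choose 2 := calc
      _ = (x⁻¹ * pcomm x y ^ n * x) * (x⁻¹ * pcomm (pcomm x y) x ^ n.choose 2 * x) := by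
        rw [ih]; group
      _ = _ := by rw [inv_mul_pow_mul_eq_mul_pcomm_pow, (hx.pow_right _).inv_mul_cancel]
    rw [pow_succ x, pcomm_mul_left, hconj, hc.mul_pow, Nat.succ_choose_two, pow_succ (pcomm x y),
      mul_assoc (pcomm x y ^ n), ← pow_add, mul_assoc, ← (hc.pow_right _).eq, ← mul_assoc]

theorem pcomm_pow_left_of_commute {x y : G} (h : Commute x (pcomm x y)) (n : ℕ) :
    pcomm (x ^ n) y = pcomm x y ^ n := by
  have hu : pcomm (pcomm x y) x = 1 := pcomm_eq_one_iff.mpr h.symm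
  have := pcomm_pow_left (x := x) (y := y) (by rw [hu]; exact .one_right x)
    (by rw [hu]; exact .one_right _) n
  rwa [hu, one_pow, mul_one] at this

theorem pcomm_pow_right {x y : G} (hy : Commute y (pcomm (pcomm x y) y))
    (hc : Commute (pcomm x y) (pcomm (pcomm x y) y)) (n : ℕ) :
    pcomm x (y ^ n) = pcomm x y ^ n * pcomm (pcomm x y) y ^ n.choose 2 := by
  induction n with
  | zero => simp [pcomm]
  | succ n ih =>
    have hconj : y⁻¹ * pcomm x (y ^ n) * y =
        (pcomm x y * pcomm (pcomm x y) y) ^ n * pcomm (pcomm x y) y ^ n.choose 2 := calc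
      _ = (y⁻¹ * pcomm x y ^ n * y) * (y⁻¹ * pcomm (pcomm x y) y ^ n.choose 2 * y) := by
        rw [ih]; group
      _ = _ := by rw [inv_mul_pow_mul_eq_mul_pcomm_pow, (hy.pow_right _).inv_mul_cancel]
    rw [pow_succ y, pcomm_mul_right, hconj, hc.mul_pow, Nat.succ_choose_two,
      pow_add (pcomm (pcomm x y) y), pow_succ' (pcomm x y)]
    simp only [mul_assoc]

theorem pcomm_mem_lowerCentralSeries_succ {n : ℕ} {x : G}
    (hx : x ∈ (⊤ : Subgroup G).lowerCentralSeries n) (y : G) :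
    pcomm x y ∈ (⊤ : Subgroup G).lowerCentralSeries (n + 1) := by
  rw [pcomm_eq_commutatorElement]
  exact commutator_mem_commutator (inv_mem hx) (mem_top _)

theorem pcomm_pcomm_mem_center (h : (⊤ : Subgroup G).lowerCentralSeries 3 = ⊥) (x y z : G) :
    pcomm (pcomm x y) z ∈ center G :=
  commutator_top_right_eq_bot_iff_le_center.mp h <|
    pcomm_mem_lowerCentralSeries_succ (pcomm_mem_lowerCentralSeries_succ (mem_top x) y) z

end

theorem power_commutes_of_centralizing_general (K : Type*) [Group K]
    (hclass3 : (⊤ : Subgroup K).lowerCentralSeries 3 = ⊥)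
    (x y : K) (α : ℕ) (hα : 1 < α)
    (h2 : ∀ g ∈ Subgroup.closure {x, y}, Commute (pcomm x y ^ 2 ^ (α - 1)) g)
    (h3 : ∀ g ∈ Subgroup.closure {x, y},
      Commute (x ^ 2 ^ (α - 1) * pcomm x y ^ (-(2 ^ (α - 2) : ℤ))) g) :
    Commute (y ^ 2 ^ (α - 1)) x := by
  set a := 2 ^ (α - 2)
  have ha : 2 ^ (α - 1) = 2 * a := by rw [← pow_succ']; congr 1; omega
  set c := pcomm x y
  have h3_pcomm : ∀ g ∈ closure {x, y}, pcomm (x ^ (2 * a)) g = pcomm (c ^ a) g := fun g hg => by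
    rw [← commute_mul_inv_iff_pcomm_eq, ← ha, ← zpow_natCast c a, ← zpow_neg]
    simpa [a] using h3 g hg
  have hu_central := mem_center_iff.mp (pcomm_pcomm_mem_center hclass3 x y x)
  have hv_central := mem_center_iff.mp (pcomm_pcomm_mem_center hclass3 x y y)
  have hv_pow : pcomm c y ^ (2 * a) = 1 := by
    rw [← pcomm_pow_left_of_commute (hv_central c), pcomm_eq_one_iff, ← ha]
    exact h2 y (subset_closure (by simp))
  have hu_pow : pcomm c x ^ a = 1 := by
    rw [← pcomm_pow_left_of_commute (hu_central c), ← h3_pcomm x (subset_closure (by simp)),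
      pcomm_eq_one_iff]
    exact (Commute.self_pow x _).symm
  have hc_pow : c ^ (2 * a) = pcomm c y ^ a := by
    have := h3_pcomm y (subset_closure (by simp))
    rwa [pcomm_pow_left (hu_central x) (hu_central c), Nat.choose_two_two_mul,
      pow_mul (pcomm c x), hu_pow, one_pow, mul_one, pcomm_pow_left_of_commute (hv_central c)]
      at this
  refine (pcomm_eq_one_iff.mp ?_).symm
  rw [ha, pcomm_pow_right (hv_central y) (hv_central c), hc_pow, ← pow_add,
    Nat.add_choose_two_two_mul, pow_mul, hv_pow, one_pow]

/-- Let `K` be a nilpotent group of class 3, `x, y ∈ K`, and `α > 1` an integer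
such that `x^(2^α)`, `[x,y]^(2^(α-1))`, and `x^(2^(α-1))[x,y]^(-2^(α-2))`
centralize `⟨x,y⟩`.  Then `y^(2^(α-1))` commutes with `x`. -/
theorem power_commutes_of_centralizing (K : Type*) [Group K]
    (hclass3 : (⊤ : Subgroup K).lowerCentralSeries 3 = ⊥)
    (x y : K) (α : ℕ) (hα : 1 < α)
    (h1 : ∀ g ∈ Subgroup.closure {x, y}, Commute (x ^ 2 ^ α) g)
    (h2 : ∀ g ∈ Subgroup.closure {x, y}, Commute (pcomm x y ^ 2 ^ (α - 1)) g)
    (h3 : ∀ g ∈ Subgroup.closure {x, y},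
      Commute (x ^ 2 ^ (α - 1) * pcomm x y ^ (-(2 ^ (α - 2) : ℤ))) g) :
    Commute (y ^ 2 ^ (α - 1)) x :=
  power_commutes_of_centralizing_general K hclass3 x y α hα h2 h3
end
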